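/- Let R > 0 and let ψ : ℂ → ℂ be holomorphic and injective on the open ball B(0,R) ⊆ ℂ. Then there exists a function H : ℂ × ℂ → ℂ which is holomorphic (jointly analytic) on B(0,R) × B(0,R) ⊆ ℂ² such that H(z,w) = (w − z)/(ψ(w) − ψ(z)) whenever z, w ∈ B(0,R) and z ≠ w, and H(z,z) = 1/ψ'(z) for every z ∈ B(0,R). (Since ψ is injective and holomorphic, ψ(w) ≠ ψ(z) for z ≠ w and ψ'(z) ≠ 0, so these expressions are well defined; the point is that the singularity on the diagonal w = z is removable.) -/

import Mathlib

open Filter Topology Set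

/-!
Write `ψ (a + u) = ∑ cₙ uⁿ` near a diagonal point `(a, a)`. For `M = !![u, e; 0, v]` one has
`(v - u) (Mⁿ)₀₁ = e (vⁿ - uⁿ)`, so the series `∑ cₙ Mⁿ`, which converges in the Banach algebra of
`2 × 2` matrices when `u`, `v`, `e` are small, has upper right entry `e` times the difference
quotient `(ψ (a + v) - ψ (a + u)) / (v - u)`. Hence `dslope ψ z w` is jointly analytic, across the
diagonal too. It does not vanish: off the diagonal by injectivity, and on the diagonal because if
`ψ' a = 0`, then `ψ - ψ a = hⁿ` near `a` with `n ≥ 2` and `h` a local coordinate, so `ψ` is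
`n`-to-one near `a`. Take `H = 1 / dslope ψ`.
-/

theorem Matrix.fin_two_upperTriangular_pow {R : Type*} [CommRing R] (u e v : R) (n : ℕ) :
    ∃ d, !![u, e; 0, v] ^ n = !![u ^ n, d; 0, v ^ n] ∧ (v - u) * d = e * (v ^ n - u ^ n) := by
  induction n with
  | zero => exact ⟨0, by simp [Matrix.one_fin_two], by ring⟩
  | succ n ih =>
    obtain ⟨d, hpow, hd⟩ := ih
    refine ⟨u ^ n * e + d * v, ?_, by linear_combination v * hd⟩
    rw [pow_succ, hpow, Matrix.mul_fin_two]
    simp [pow_succ]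

theorem Matrix.sub_mul_eq_of_hasSum_fin_two_upperTriangular_pow {R : Type*} [CommRing R]
    [TopologicalSpace R] [IsTopologicalRing R] [T2Space R] {c : ℕ → R} {u e v s fu fv : R}
    (hs : HasSum (fun n ↦ c n * (!![u, e; 0, v] ^ n) 0 1) s)
    (hu : HasSum (fun n ↦ c n * u ^ n) fu) (hv : HasSum (fun n ↦ c n * v ^ n) fv) :
    (v - u) * s = e * (fv - fu) := by
  refine (hs.mul_left (v - u)).unique ?_
  convert (hv.sub hu).mul_left e using 2 with n
  obtain ⟨d, hpow, hd⟩ := Matrix.fin_two_upperTriangular_pow u e v n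
  rw [hpow]
  simp only [Matrix.of_apply, Matrix.cons_val', Matrix.cons_val_zero,
    Matrix.cons_val_one, Matrix.empty_val', Matrix.cons_val_fin_one]
  linear_combination c n * hd

theorem FormalMultilinearSeries.radius_le_radius_ofScalars_coeff {𝕜 : Type*}
    [NontriviallyNormedField 𝕜] (A : Type*) [NormedRing A] [NormedAlgebra 𝕜 A] [NormOneClass A]
    (p : FormalMultilinearSeries 𝕜 𝕜 𝕜) : p.radius ≤ (ofScalars A p.coeff).radius :=
  radius_le_of_le fun n ↦ (ofScalars_norm A p.coeff n).trans_le p.norm_apply_eq_norm_coef.ge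

theorem hasDerivAt_of_eventually_sub_eq_smul {𝕜 F : Type*} [NontriviallyNormedField 𝕜]
    [NormedAddCommGroup F] [NormedSpace 𝕜 F] {f g : 𝕜 → F} {z : 𝕜} (hg : ContinuousAt g z)
    (h : ∀ᶠ w in 𝓝 z, f w - f z = (w - z) • g w) : HasDerivAt f (g z) z := by
  rw [hasDerivAt_iff_tendsto_slope]
  refine (hg.tendsto.mono_left nhdsWithin_le_nhds).congr' ?_
  filter_upwards [h.filter_mono nhdsWithin_le_nhds, self_mem_nhdsWithin] with w hw hne
  rw [slope_def_module, hw, smul_smul, inv_mul_cancel₀ (sub_ne_zero.2 hne), one_smul]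

section MatrixAlgebra

attribute [local instance] Matrix.linftyOpNormedRing Matrix.linftyOpNormedAlgebra

variable {𝕜 : Type*} [NontriviallyNormedField 𝕜]

theorem AnalyticAt.matrix_fin_two_upperTriangular {E : Type*} [NormedAddCommGroup E]
    [NormedSpace 𝕜 E] {f g h : E → 𝕜} {x : E} (hf : AnalyticAt 𝕜 f x) (hg : AnalyticAt 𝕜 g x)
    (hh : AnalyticAt 𝕜 h x) : AnalyticAt 𝕜 (fun y ↦ !![f y, g y; 0, h y]) x := by
  have hsum : (fun y ↦ !![f y, g y; 0, h y]) = fun y ↦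
      f y • !![1, 0; 0, 0] + g y • !![0, 1; 0, 0] + h y • !![0, 0; 0, 1] := by
    funext y; ext i j; fin_cases i <;> fin_cases j <;> simp
  rw [hsum]
  exact ((hf.smul analyticAt_const).add (hg.smul analyticAt_const)).add (hh.smul analyticAt_const)

variable [CompleteSpace 𝕜]

/-- Stated for the uniformity of the `L∞` operator norm: instance search on `Matrix` finds the
product uniformity, which is only definitionally equal to it. -/
theorem Matrix.linftyOp_completeSpace (n : Type*) [Fintype n] [DecidableEq n] :
    @CompleteSpace (Matrix n n 𝕜) PseudoMetricSpace.toUniformSpace :=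
  FiniteDimensional.complete 𝕜 _

attribute [local instance] Matrix.linftyOp_completeSpace

theorem HasFPowerSeriesOnBall.sub_mul_ofScalars_sum_fin_two_apply {f : 𝕜 → 𝕜}
    {p : FormalMultilinearSeries 𝕜 𝕜 𝕜} {a : 𝕜} {r : ENNReal} (hp : HasFPowerSeriesOnBall f p a r)
    {u e v : 𝕜} (hu : u ∈ Metric.eball 0 r) (hv : v ∈ Metric.eball 0 r)
    (hM : !![u, e; 0, v] ∈ Metric.eball 0 r) :
    (v - u) * (FormalMultilinearSeries.ofScalars (Matrix (Fin 2) (Fin 2) 𝕜) p.coeff).sum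
      !![u, e; 0, v] 0 1 = e * (f (a + v) - f (a + u)) := by
  set P := FormalMultilinearSeries.ofScalars (Matrix (Fin 2) (Fin 2) 𝕜) p.coeff
  have hcoeff : ∀ y ∈ Metric.eball (0 : 𝕜) r, HasSum (fun n ↦ p.coeff n * y ^ n) (f (a + y)) :=
    fun y hy ↦ by simpa [mul_comm] using hp.hasSum hy
  set L := LinearMap.toContinuousLinearMap (Matrix.entryLinearMap 𝕜 𝕜 (0 : Fin 2) (1 : Fin 2))
  have hterm (n : ℕ) : L (P n fun _ ↦ !![u, e; 0, v]) = p.coeff n * (!![u, e; 0, v] ^ n) 0 1 :=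
    congrArg (fun X : Matrix (Fin 2) (Fin 2) 𝕜 ↦ X 0 1)
      (FormalMultilinearSeries.ofScalars_apply_eq p.coeff _ n)
  have hentry : HasSum (fun n ↦ L (P n fun _ ↦ !![u, e; 0, v])) (L (P.sum !![u, e; 0, v])) :=
    L.hasSum (P.hasSum (Metric.eball_subset_eball
      (hp.r_le.trans (p.radius_le_radius_ofScalars_coeff _)) hM))
  simp only [hterm] at hentry
  exact Matrix.sub_mul_eq_of_hasSum_fin_two_upperTriangular_pow hentry (hcoeff u hu) (hcoeff v hv)

theorem AnalyticAt.exists_analyticAt_sub_mul_eq {f : 𝕜 → 𝕜} {a : 𝕜} (hf : AnalyticAt 𝕜 f a) :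
    ∃ K : 𝕜 × 𝕜 → 𝕜, AnalyticAt 𝕜 K (a, a) ∧
      ∀ᶠ q in 𝓝 (a, a), (q.2 - q.1) * K q = f q.2 - f q.1 := by
  obtain ⟨p, r, hp⟩ := hf
  have hr : Metric.eball 0 r ∈ 𝓝 (0 : Matrix (Fin 2) (Fin 2) 𝕜) :=
    Metric.isOpen_eball.mem_nhds (Metric.mem_eball_self hp.r_pos)
  obtain ⟨e, he_mem, he⟩ : ∃ e : 𝕜, !![0, e; 0, 0] ∈ Metric.eball 0 r ∧ e ≠ 0 := by
    have hzero : !![(0 : 𝕜), 0; 0, 0] = 0 := by ext i j; fin_cases i <;> fin_cases j <;> rfl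
    have hsmall : ∀ᶠ t in 𝓝 (0 : 𝕜), !![0, t; 0, 0] ∈ Metric.eball 0 r :=
      (analyticAt_const.matrix_fin_two_upperTriangular analyticAt_id analyticAt_const).continuousAt
        |>.preimage_mem_nhds (by rwa [id, hzero])
    exact ((hsmall.filter_mono nhdsWithin_le_nhds).and self_mem_nhdsWithin :
      ∀ᶠ t in 𝓝[≠] (0 : 𝕜), _ ∧ t ≠ 0).exists
  set M : 𝕜 × 𝕜 → Matrix (Fin 2) (Fin 2) 𝕜 := fun q ↦ !![q.1 - a, e; 0, q.2 - a]
  have hM : AnalyticAt 𝕜 M (a, a) :=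
    (analyticAt_fst.sub analyticAt_const).matrix_fin_two_upperTriangular analyticAt_const
      (analyticAt_snd.sub analyticAt_const)
  have hMa : M (a, a) ∈ Metric.eball 0 r := by simpa [M] using he_mem
  set P := FormalMultilinearSeries.ofScalars (Matrix (Fin 2) (Fin 2) 𝕜) p.coeff
  refine ⟨fun q ↦ e⁻¹ * P.sum (M q) 0 1, analyticAt_const.mul ?_, ?_⟩
  · have hPr : r ≤ P.radius := hp.r_le.trans (p.radius_le_radius_ofScalars_coeff _)
    exact (LinearMap.toContinuousLinearMap (Matrix.entryLinearMap 𝕜 𝕜 0 1)).analyticAt _ |>.comp <|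
      ((P.hasFPowerSeriesOnBall (hp.r_pos.trans_le hPr)).analyticAt_of_mem
        (Metric.eball_subset_eball hPr hMa)).comp hM
  have hnear : ∀ᶠ y in 𝓝 a, y - a ∈ Metric.eball (0 : 𝕜) r :=
    (continuous_id.sub continuous_const).continuousAt.preimage_mem_nhds
      (by simpa using Metric.isOpen_eball.mem_nhds (Metric.mem_eball_self hp.r_pos))
  filter_upwards [hM.continuousAt.preimage_mem_nhds (Metric.isOpen_eball.mem_nhds hMa),
    continuousAt_fst.preimage_mem_nhds hnear, continuousAt_snd.preimage_mem_nhds hnear]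
    with q hqM hq₁ hq₂
  have key := hp.sub_mul_ofScalars_sum_fin_two_apply hq₁ hq₂ hqM
  simp only [add_sub_cancel, sub_sub_sub_cancel_right] at key
  field_simp
  linear_combination key

end MatrixAlgebra

section DividedDifference

variable {𝕜 : Type*} [NontriviallyNormedField 𝕜] [CompleteSpace 𝕜] {f : 𝕜 → 𝕜}

theorem AnalyticAt.analyticAt_uncurry_dslope {a : 𝕜} (hf : AnalyticAt 𝕜 f a) :
    AnalyticAt 𝕜 (fun q : 𝕜 × 𝕜 ↦ dslope f q.1 q.2) (a, a) := by
  obtain ⟨K, hK, hKf⟩ := hf.exists_analyticAt_sub_mul_eq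
  refine hK.congr ?_
  filter_upwards [hK.eventually_analyticAt, hKf.eventually_nhds] with ⟨z, w⟩ hKq hnear
  rcases eq_or_ne w z with rfl | hne
  · have hline : Tendsto (fun y ↦ (w, y)) (𝓝 w) (𝓝 (w, w)) :=
      (continuous_const.prodMk continuous_id).tendsto w
    have := hasDerivAt_of_eventually_sub_eq_smul (hKq.continuousAt.comp hline)
      ((hline.eventually hnear).mono fun y hy ↦ hy.symm)
    exact ((dslope_same f w).trans this.deriv).symm
  · rw [dslope_of_ne _ hne, slope_def_field, ← hnear.self_of_nhds,
      mul_div_cancel_left₀ _ (sub_ne_zero.2 hne)]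

theorem AnalyticOnNhd.uncurry_dslope {s : Set 𝕜} (hf : AnalyticOnNhd 𝕜 f s) :
    AnalyticOnNhd 𝕜 (fun q : 𝕜 × 𝕜 ↦ dslope f q.1 q.2) (s ×ˢ s) := by
  rintro ⟨z, w⟩ ⟨hz, hw⟩
  rcases eq_or_ne z w with rfl | hne
  · exact (hf z hz).analyticAt_uncurry_dslope
  have hquot : AnalyticAt 𝕜 (fun q : 𝕜 × 𝕜 ↦ (f q.2 - f q.1) / (q.2 - q.1)) (z, w) :=
    (((hf w hw).comp analyticAt_snd).sub ((hf z hz).comp analyticAt_fst)).div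
      (analyticAt_snd.sub analyticAt_fst) (sub_ne_zero.2 hne.symm)
  refine hquot.congr ?_
  filter_upwards [(isOpen_ne_fun continuous_fst continuous_snd).mem_nhds hne] with q hq
  rw [dslope_of_ne _ (Ne.symm hq), slope_def_field]

end DividedDifference

theorem exists_analyticAt_pow_eq {g : ℂ → ℂ} {a : ℂ} (hg : AnalyticAt ℂ g a) (ha : g a ≠ 0)
    {n : ℕ} (hn : n ≠ 0) : ∃ r : ℂ → ℂ, AnalyticAt ℂ r a ∧ r a ≠ 0 ∧ ∀ z, r z ^ n = g z := by
  obtain ⟨b, hb⟩ : ∃ b : ℂ, b ^ n = g a := ⟨_, Complex.cpow_nat_inv_pow _ hn⟩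
  refine ⟨fun z ↦ b * (g z / g a) ^ (n⁻¹ : ℂ), analyticAt_const.mul
    ((hg.div analyticAt_const ha).cpow analyticAt_const (by simp [ha])), ?_, fun z ↦ ?_⟩
  · simpa [ha] using fun hb0 : b = 0 ↦ ha (by rw [← hb, hb0, zero_pow hn])
  · rw [mul_pow, Complex.cpow_nat_inv_pow _ hn, hb, mul_div_cancel₀ _ ha]

theorem not_injOn_of_eventually_eq_add_pow {X : Type*} [TopologicalSpace X] {f h : X → ℂ} {a : X}
    {s : Set X} {n : ℕ} (hn : 2 ≤ n) (hs : s ∈ 𝓝 a) (hh : map h (𝓝 a) = 𝓝 0)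
    (hf : ∀ᶠ z in 𝓝 a, f z = f a + h z ^ n) : ¬InjOn f s := by
  intro hinj
  obtain ⟨ζ, hζ⟩ : ∃ ζ : ℂ, IsPrimitiveRoot ζ n := ⟨_, Complex.isPrimitiveRoot_exp n (by omega)⟩
  have himg : ∀ᶠ v in 𝓝 0, v ∈ h '' {z | z ∈ s ∧ f z = f a + h z ^ n} :=
    hh ▸ image_mem_map (inter_mem hs hf)
  have hrot : ∀ᶠ v in 𝓝 0, ζ * v ∈ h '' {z | z ∈ s ∧ f z = f a + h z ^ n} :=
    (continuous_const_mul ζ).tendsto' 0 0 (mul_zero ζ) |>.eventually himg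
  obtain ⟨v, ⟨⟨z₁, hz₁, rfl⟩, ⟨z₂, hz₂, hζz⟩⟩, hv⟩ :=
    (((himg.and hrot).filter_mono nhdsWithin_le_nhds).and self_mem_nhdsWithin :
      ∀ᶠ v in 𝓝[≠] (0 : ℂ), _ ∧ v ≠ 0).exists
  obtain rfl : z₂ = z₁ := hinj hz₂.1 hz₁.1 <| by
    rw [hz₁.2, hz₂.2, hζz, mul_pow, hζ.pow_eq_one, one_mul]
  exact hζ.ne_one (by omega) (mul_right_cancel₀ hv (hζz.symm.trans (one_mul _).symm))

theorem AnalyticAt.deriv_ne_zero_of_injOn {f : ℂ → ℂ} {a : ℂ} {s : Set ℂ} (hf : AnalyticAt ℂ f a)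
    (hs : s ∈ 𝓝 a) (hinj : InjOn f s) : deriv f a ≠ 0 := by
  intro hderiv
  have hnonconst : ¬∀ᶠ z in 𝓝 a, f z - f a = 0 := by
    intro hconst
    obtain ⟨z, ⟨hz, hzs⟩, hne⟩ := (((hconst.and hs).filter_mono nhdsWithin_le_nhds).and
      self_mem_nhdsWithin : ∀ᶠ z in 𝓝[≠] a, _ ∧ z ≠ a).exists
    exact hne (hinj hzs (mem_of_mem_nhds hs) (sub_eq_zero.1 hz))
  obtain ⟨n, g, hg, hga, hfg⟩ :=
    (hf.sub analyticAt_const).exists_eventuallyEq_pow_smul_nonzero_iff.2 hnonconst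
  -- order `0` is impossible at `a` itself, and order `1` would make `g a ≠ 0` the derivative
  have hn : 2 ≤ n := by
    by_contra! hn
    interval_cases n
    · simpa [eq_comm, hga] using hfg.self_of_nhds
    · refine hga ((hasDerivAt_of_eventually_sub_eq_smul hg.continuousAt ?_).deriv ▸ hderiv)
      simpa using hfg
  obtain ⟨r, hr, hra, hrg⟩ := exists_analyticAt_pow_eq hg hga (n := n) (by omega)
  have hroot : HasStrictDerivAt (fun z ↦ (z - a) * r z) (r a) a := by
    simpa using ((hasStrictDerivAt_id a).fun_sub (hasStrictDerivAt_const a a)).fun_mul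
      hr.hasStrictDerivAt
  refine not_injOn_of_eventually_eq_add_pow hn hs (by simpa using hroot.map_nhds_eq hra) ?_ hinj
  filter_upwards [hfg] with z hz
  rw [mul_pow, hrg, ← smul_eq_mul, ← hz, Pi.sub_apply, add_sub_cancel]

theorem cauchy_kernel_diagonal_removable_general
    (R : ℝ) (ψ : ℂ → ℂ)
    (hψ : DifferentiableOn ℂ ψ (Metric.ball 0 R))
    (hinj : Set.InjOn ψ (Metric.ball 0 R)) :
    ∃ H : ℂ × ℂ → ℂ,
      AnalyticOnNhd ℂ H (Metric.ball (0 : ℂ) R ×ˢ Metric.ball (0 : ℂ) R) ∧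
      (∀ z w : ℂ, z ∈ Metric.ball (0 : ℂ) R → w ∈ Metric.ball (0 : ℂ) R → z ≠ w →
        H (z, w) = (w - z) / (ψ w - ψ z)) ∧
      (∀ z ∈ Metric.ball (0 : ℂ) R, H (z, z) = 1 / deriv ψ z) := by
  have hψ' := hψ.analyticOnNhd Metric.isOpen_ball
  refine ⟨fun q ↦ (dslope ψ q.1 q.2)⁻¹, hψ'.uncurry_dslope.inv ?_, fun z w _ _ hne ↦ ?_,
    fun z _ ↦ by simp [dslope_same]⟩
  · rintro ⟨z, w⟩ ⟨hz, hw⟩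
    rcases eq_or_ne z w with rfl | hne
    · simpa using (hψ' z hz).deriv_ne_zero_of_injOn (Metric.isOpen_ball.mem_nhds hz) hinj
    · rw [dslope_of_ne _ hne.symm, slope_def_field]
      exact div_ne_zero (sub_ne_zero.2 fun h ↦ hne (hinj hz hw h.symm)) (sub_ne_zero.2 hne.symm)
  · simp [dslope_of_ne _ hne.symm, slope_def_field]

/-- If `ψ` is holomorphic and injective on the open ball `B(0,R) ⊆ ℂ`,
then there is a function `H` jointly analytic on `B(0,R) × B(0,R)` with
`H(z,w) = (w - z)/(ψ w - ψ z)` off the diagonal and `H(z,z) = 1/ψ'(z)` on the diagonal. -/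
theorem cauchy_kernel_diagonal_removable
    (R : ℝ) (hR : 0 < R) (ψ : ℂ → ℂ)
    (hψ : DifferentiableOn ℂ ψ (Metric.ball 0 R))
    (hinj : Set.InjOn ψ (Metric.ball 0 R)) :
    ∃ H : ℂ × ℂ → ℂ,
      AnalyticOnNhd ℂ H (Metric.ball (0 : ℂ) R ×ˢ Metric.ball (0 : ℂ) R) ∧
      (∀ z w : ℂ, z ∈ Metric.ball (0 : ℂ) R → w ∈ Metric.ball (0 : ℂ) R → z ≠ w →
        H (z, w) = (w - z) / (ψ w - ψ z)) ∧
      (∀ z ∈ Metric.ball (0 : ℂ) R, H (z, z) = 1 / deriv ψ z) :=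
  cauchy_kernel_diagonal_removable_general R ψ hψ hinj
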